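/- arXiv:2302.04649 — 4 statements merged into one kernel-verified Lean document; each statement's English description precedes it below -/
import Mathlib

section
/- For a random angle θ with an even probability distribution, the averaged conjugation of a density matrix ρ by the Z-rotation R_Z(θ) = e^{-iθZ/2} equals the convex combination ((1+r₁)/2)·ρ + ((1-r₁)/2)·ZρZ, where r₁ = E[cos θ]. -/
/-!
`R_Z(θ)` is diagonal, so conjugating by it fixes the diagonal of `ρ` and multiplies the
off-diagonal entries by `e^{∓iθ}`, while `Z ρ Z` flips the signs of the off-diagonal entries.
Averaging, the off-diagonal factors become the characteristic function of `θ` at `±1`, which is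
real for a symmetric law and hence equals `E[cos θ] = r₁ = (1 + r₁)/2 - (1 - r₁)/2`.
-/

open MeasureTheory Matrix

noncomputable def RZ (θ : ℝ) : Matrix (Fin 2) (Fin 2) ℂ :=
  !![Complex.exp (-(Complex.I * θ / 2)), 0; 0, Complex.exp (Complex.I * θ / 2)]

noncomputable def Zg : Matrix (Fin 2) (Fin 2) ℂ := !![1, 0; 0, -1]

open Complex ComplexConjugate
open scoped RealInnerProductSpace

section CharFun

variable {E : Type*} [NormedAddCommGroup E] [InnerProductSpace ℝ E] [MeasurableSpace E]
  [BorelSpace E]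

lemma charFun_map_neg (μ : Measure E) (t : E) :
    charFun (μ.map (fun x => -x)) t = charFun μ (-t) := by
  simpa using charFun_map_smul (μ := μ) (-1) t

lemma charFun_eq_integral_cos_of_map_neg_eq (μ : Measure E) [IsFiniteMeasure μ]
    (hμ : μ.map (fun x => -x) = μ) (t : E) :
    charFun μ t = ((∫ x, Real.cos ⟪x, t⟫ ∂μ : ℝ) : ℂ) := by
  have hreal : conj (charFun μ t) = charFun μ t := by
    rw [← charFun_neg, ← charFun_map_neg, hμ]
  have hint : Integrable (fun x => exp (⟪x, t⟫ * I)) μ :=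
    .of_bound (by fun_prop) 1 (ae_of_all _ fun x => by simp)
  rw [← conj_eq_iff_re.mp hreal, charFun_apply, ← RCLike.re_to_complex, ← integral_re hint]
  simp [exp_ofReal_mul_I_re]

end CharFun

lemma RZ_mul_mul_conjTranspose (θ : ℝ) (ρ : Matrix (Fin 2) (Fin 2) ℂ) :
    RZ θ * ρ * (RZ θ)ᴴ
      = !![ρ 0 0, exp (-(θ * I)) * ρ 0 1; exp (θ * I) * ρ 1 0, ρ 1 1] := by
  ext i j
  fin_cases i <;> fin_cases j <;>
    simp [RZ, mul_apply, vecMul, dotProduct, Fin.sum_univ_two, ← exp_conj, map_ofNat] <;>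
    rw [mul_right_comm, ← exp_add] <;> ring_nf <;> simp

lemma Zg_mul_mul_Zg (ρ : Matrix (Fin 2) (Fin 2) ℂ) :
    Zg * ρ * Zg = !![ρ 0 0, -ρ 0 1; -ρ 1 0, ρ 1 1] := by
  ext i j
  fin_cases i <;> fin_cases j <;> simp [Zg, mul_apply, vecMul, dotProduct, Fin.sum_univ_two]

theorem stmt0_general (μ : Measure ℝ) [IsProbabilityMeasure μ]
    (hsym : μ.map (fun θ => -θ) = μ)
    (ρ : Matrix (Fin 2) (Fin 2) ℂ) :
    ∀ i j, (∫ θ, (RZ θ * ρ * (RZ θ)ᴴ) i j ∂μ)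
      = ((((1 + ∫ θ, Real.cos θ ∂μ) / 2 : ℝ) : ℂ) • ρ
        + (((1 - ∫ θ, Real.cos θ ∂μ) / 2 : ℝ) : ℂ) • (Zg * ρ * Zg)) i j := by
  have hplus : ∫ θ, exp (θ * I) ∂μ = ((∫ θ, Real.cos θ ∂μ : ℝ) : ℂ) := by
    simpa only [charFun_apply_real, ofReal_one, one_mul, RCLike.inner_apply, Real.ringHom_apply]
      using charFun_eq_integral_cos_of_map_neg_eq μ hsym 1
  have hminus : ∫ θ, exp (-(θ * I)) ∂μ = ((∫ θ, Real.cos θ ∂μ : ℝ) : ℂ) := by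
    simpa only [charFun_apply_real, ofReal_neg, ofReal_one, neg_mul, one_mul, RCLike.inner_apply,
      Real.ringHom_apply, mul_neg, mul_one, Real.cos_neg]
      using charFun_eq_integral_cos_of_map_neg_eq μ hsym (-1)
  intro i j
  simp only [RZ_mul_mul_conjTranspose, Zg_mul_mul_Zg]
  fin_cases i <;> fin_cases j <;>
    simp [integral_mul_const, hplus, hminus] <;> ring

/-- for an even distribution of θ, the averaged conjugation by `R_Z(θ)` is
`((1+r₁)/2) ρ + ((1-r₁)/2) Z ρ Z` with `r₁ = E[cos θ]` (stated entrywise). -/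
theorem stmt0 (μ : Measure ℝ) [IsProbabilityMeasure μ]
    (hsym : μ.map (fun θ => -θ) = μ)
    (ρ : Matrix (Fin 2) (Fin 2) ℂ)
    (hcos : Integrable (fun θ => Real.cos θ) μ)
    (hint : ∀ i j, Integrable (fun θ => (RZ θ * ρ * (RZ θ)ᴴ) i j) μ) :
    ∀ i j, (∫ θ, (RZ θ * ρ * (RZ θ)ᴴ) i j ∂μ)
      = ((((1 + ∫ θ, Real.cos θ ∂μ) / 2 : ℝ) : ℂ) • ρ
        + (((1 - ∫ θ, Real.cos θ ∂μ) / 2 : ℝ) : ℂ) • (Zg * ρ * Zg)) i j :=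
  stmt0_general μ hsym ρ
end

section
/- For a random angle θ with an even distribution, the averaged 2-fold channel E[(R_Z(θ)⊗R_Z(θ)) ρ (R_Z(θ)⊗R_Z(θ))†] acting on 4×4 matrices equals a·ρ + b·(Z⊗Z)ρ(Z⊗Z) + c/2·(S⊗S)ρ(S⊗S)† + c/2·(S†⊗S†)ρ(S†⊗S†)†, where a = (1+r₂+2r₁)/4, b = (1+r₂-2r₁)/4, c = (1-r₂)/2, with r₁ = E[cos θ] and r₂ = E[cos 2θ]. -/
open MeasureTheory Matrix Kronecker

noncomputable def Sg : Matrix (Fin 2) (Fin 2) ℂ := !![1, 0; 0, Complex.I]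

noncomputable def K (i j : Fin 2 × Fin 2) : ℝ :=
  (((i.1 : ℕ) : ℝ) + ((i.2 : ℕ) : ℝ)) - (((j.1 : ℕ) : ℝ) + ((j.2 : ℕ) : ℝ))

set_option maxHeartbeats 2000000 in
lemma entry (θ : ℝ) (ρ : Matrix (Fin 2 × Fin 2) (Fin 2 × Fin 2) ℂ) (i j : Fin 2 × Fin 2) :
    ((RZ θ ⊗ₖ RZ θ) * ρ * (RZ θ ⊗ₖ RZ θ)ᴴ) i j = ρ i j * Complex.exp (Complex.I * (K i j * θ)) := by
  fin_cases i <;> fin_cases j <;>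
    simp [RZ, K, Matrix.mul_apply, Fintype.sum_prod_type, Fin.sum_univ_succ, kroneckerMap_apply,
      Matrix.conjTranspose_apply, ← Complex.exp_conj, ← Complex.exp_add, Complex.conj_ofNat] <;>
    ring_nf
  all_goals first
  | tauto
  | (rw [mul_right_comm, ← Complex.exp_add]; simp)
  | (rw [sq, ← Complex.exp_add]; ring_nf)

lemma intsin (μ : Measure ℝ) (hsym : μ.map (fun θ => -θ) = μ) (k : ℝ) :
    ∫ θ, Real.sin (k * θ) ∂μ = 0 := by
  have hm : AEStronglyMeasurable (fun θ : ℝ => Real.sin (k * θ)) (μ.map (fun θ : ℝ => -θ)) :=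
    (Real.measurable_sin.comp (measurable_id.const_mul k)).aestronglyMeasurable
  have h : ∫ θ, Real.sin (k * θ) ∂μ = ∫ θ, Real.sin (k * -θ) ∂μ := by
    conv_lhs => rw [← hsym]
    exact integral_map (measurable_neg : Measurable fun x : ℝ => -x).aemeasurable hm
  simp only [mul_neg, Real.sin_neg, integral_neg] at h
  linarith

lemma intexp (μ : Measure ℝ) [IsProbabilityMeasure μ] (hsym : μ.map (fun θ => -θ) = μ) (k : ℝ)
    (hc : Integrable (fun θ => Real.cos (k * θ)) μ) :
    ∫ θ, Complex.exp (Complex.I * (k * θ)) ∂μ = ((∫ θ, Real.cos (k * θ) ∂μ : ℝ) : ℂ) := by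
  have hoc : ∀ f : ℝ → ℝ, ∫ θ, ((f θ : ℂ)) ∂μ = ((∫ θ, f θ ∂μ : ℝ) : ℂ) := fun f => by
    exact integral_ofReal
  have hs : Integrable (fun θ => Real.sin (k * θ)) μ := by
    refine (integrable_const 1).mono'
      ((Real.measurable_sin.comp (measurable_id.const_mul k)).aestronglyMeasurable) ?_
    filter_upwards with θ
    simpa using Real.abs_sin_le_one (k * θ)
  have h1 : Integrable (fun θ => ((Real.cos (k * θ) : ℂ))) μ := by exact hc.ofReal
  have h2 : Integrable (fun θ => ((Real.sin (k * θ) : ℂ)) * Complex.I) μ := by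
    exact Integrable.mul_const (by exact hs.ofReal) Complex.I
  have heq : (fun θ : ℝ => Complex.exp (Complex.I * (k * θ)))
      = fun θ => ((Real.cos (k * θ) : ℂ)) + ((Real.sin (k * θ) : ℂ)) * Complex.I := by
    funext θ
    rw [mul_comm, show ((k : ℂ) * θ) = ((k * θ : ℝ) : ℂ) by push_cast; ring, Complex.exp_mul_I]
    norm_cast
  rw [heq, integral_add h1 h2, integral_mul_const, hoc, hoc, intsin μ hsym k]
  simp

lemma main_lhs (μ : Measure ℝ) [IsProbabilityMeasure μ] (hsym : μ.map (fun θ => -θ) = μ)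
    (ρ : Matrix (Fin 2 × Fin 2) (Fin 2 × Fin 2) ℂ) (i j : Fin 2 × Fin 2)
    (hc : Integrable (fun θ => Real.cos (K i j * θ)) μ) :
    ∫ θ, ((RZ θ ⊗ₖ RZ θ) * ρ * (RZ θ ⊗ₖ RZ θ)ᴴ) i j ∂μ
      = ((∫ θ, Real.cos (K i j * θ) ∂μ : ℝ) : ℂ) * ρ i j := by
  simp only [entry]
  rw [integral_const_mul, intexp μ hsym _ hc, mul_comm]

set_option maxHeartbeats 4000000

/-- for an even distribution of θ, the averaged 2-fold channel
`E[(R_Z⊗R_Z) ρ (R_Z⊗R_Z)†]` equals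
`a ρ + b (Z⊗Z)ρ(Z⊗Z) + (c/2)(S⊗S)ρ(S⊗S)† + (c/2)(S†⊗S†)ρ(S†⊗S†)†` with
`a = (1+r₂+2r₁)/4`, `b = (1+r₂-2r₁)/4`, `c = (1-r₂)/2` (stated entrywise). -/
theorem stmt4 (μ : Measure ℝ) [IsProbabilityMeasure μ]
    (hsym : μ.map (fun θ => -θ) = μ)
    (ρ : Matrix (Fin 2 × Fin 2) (Fin 2 × Fin 2) ℂ)
    (hcos : Integrable (fun θ => Real.cos θ) μ)
    (hcos2 : Integrable (fun θ => Real.cos (2 * θ)) μ)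
    (hint : ∀ i j, Integrable (fun θ => ((RZ θ ⊗ₖ RZ θ) * ρ * (RZ θ ⊗ₖ RZ θ)ᴴ) i j) μ)
    (r₁ r₂ : ℝ) (hr₁ : r₁ = ∫ θ, Real.cos θ ∂μ) (hr₂ : r₂ = ∫ θ, Real.cos (2 * θ) ∂μ) :
    ∀ i j, (∫ θ, ((RZ θ ⊗ₖ RZ θ) * ρ * (RZ θ ⊗ₖ RZ θ)ᴴ) i j ∂μ)
      = ((((1 + r₂ + 2 * r₁) / 4 : ℝ) : ℂ) • ρ
        + (((1 + r₂ - 2 * r₁) / 4 : ℝ) : ℂ) • ((Zg ⊗ₖ Zg) * ρ * (Zg ⊗ₖ Zg))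
        + ((((1 - r₂) / 2) / 2 : ℝ) : ℂ) • ((Sg ⊗ₖ Sg) * ρ * (Sg ⊗ₖ Sg)ᴴ)
        + ((((1 - r₂) / 2) / 2 : ℝ) : ℂ) • ((Sgᴴ ⊗ₖ Sgᴴ) * ρ * (Sgᴴ ⊗ₖ Sgᴴ)ᴴ)) i j := by
  intro i j
  subst hr₁ hr₂
  fin_cases i <;> fin_cases j <;>
    rw [main_lhs μ hsym ρ _ _ (by
      norm_num [K]
      all_goals first
      | exact hcos
      | simpa using hcos
      | simpa using hcos2)] <;>
    norm_num [K, Zg, Sg, Matrix.mul_apply, Fintype.sum_prod_type, Fin.sum_univ_succ,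
      kroneckerMap_apply, Matrix.conjTranspose_apply, Matrix.add_apply, Matrix.smul_apply]
  all_goals
    try simp only [show ∀ z : ℂ, Complex.I * z * Complex.I = -z from fun z => by
      rw [mul_comm, ← mul_assoc, Complex.I_mul_I]; ring]
  all_goals ring
end

section
/- The supremum over θ ∈ ℝ of |sin 2θ| + |(1+cos 2θ+2cos θ)/4| + |(1+cos 2θ-2cos θ)/4| + |(1-cos 2θ+2sin θ)/4| + |(1-cos 2θ-2sin θ)/4| equals 1 + √2. -/
/-!
Since `1 + cos 2θ = 2 cos² θ` and `1 - cos 2θ = 2 sin² θ`, the second and third terms are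
`c (c + 1) / 2` and `c (c - 1) / 2` with `c = cos θ`, whose absolute values add up to `|c|`
because `|c| ≤ 1`; likewise the last two terms add up to `|sin θ|`. The expression is therefore
`|sin 2θ| + |cos θ| + |sin θ| ≤ 1 + √2`, with equality at `θ = π / 4`.
-/

open Real

lemma abs_add_two_mul_div_four_add_abs_sub_two_mul_div_four {x y : ℝ} (hx : |x| ≤ 1)
    (hy : y = 2 * x ^ 2) : |(y + 2 * x) / 4| + |(y - 2 * x) / 4| = |x| := by
  obtain ⟨hx₁, hx₂⟩ := abs_le.mp hx
  subst hy
  rw [show (2 * x ^ 2 + 2 * x) / 4 = x * (1 + x) / 2 by ring,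
    show (2 * x ^ 2 - 2 * x) / 4 = -(x * (1 - x)) / 2 by ring,
    abs_div, abs_div, abs_neg, abs_mul, abs_mul, abs_of_nonneg (by linarith : 0 ≤ 1 + x),
    abs_of_nonneg (by linarith : 0 ≤ 1 - x), abs_two]
  ring

lemma abs_add_abs_le_sqrt_two {c s : ℝ} (h : s ^ 2 + c ^ 2 = 1) : |c| + |s| ≤ √2 := by
  rw [le_sqrt (by positivity) zero_le_two, add_sq, sq_abs, sq_abs]
  nlinarith [sq_nonneg (|c| - |s|), sq_abs c, sq_abs s]

lemma sum_abs_terms_eq (θ : ℝ) :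
    |sin (2 * θ)|
      + |(1 + cos (2 * θ) + 2 * cos θ) / 4| + |(1 + cos (2 * θ) - 2 * cos θ) / 4|
      + |(1 - cos (2 * θ) + 2 * sin θ) / 4| + |(1 - cos (2 * θ) - 2 * sin θ) / 4|
      = |sin (2 * θ)| + |cos θ| + |sin θ| := by
  have hc := abs_add_two_mul_div_four_add_abs_sub_two_mul_div_four (abs_cos_le_one θ)
    (y := 1 + cos (2 * θ)) (by rw [cos_two_mul]; ring)
  have hs := abs_add_two_mul_div_four_add_abs_sub_two_mul_div_four (abs_sin_le_one θ)
    (y := 1 - cos (2 * θ)) (by rw [cos_two_mul_eq_one_sub]; ring)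
  linarith

/-- the supremum over θ of
`|sin 2θ| + |(1+cos 2θ+2cos θ)/4| + |(1+cos 2θ-2cos θ)/4|
  + |(1-cos 2θ+2sin θ)/4| + |(1-cos 2θ-2sin θ)/4|` equals `1 + √2`. -/
theorem stmt14 :
    IsLUB (Set.range fun θ : ℝ =>
      |Real.sin (2 * θ)|
      + |(1 + Real.cos (2 * θ) + 2 * Real.cos θ) / 4|
      + |(1 + Real.cos (2 * θ) - 2 * Real.cos θ) / 4|
      + |(1 - Real.cos (2 * θ) + 2 * Real.sin θ) / 4|
      + |(1 - Real.cos (2 * θ) - 2 * Real.sin θ) / 4|) (1 + Real.sqrt 2) := by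
  simp only [sum_abs_terms_eq]
  refine ⟨?_, fun b hb => ?_⟩
  · rintro _ ⟨θ, rfl⟩
    have := abs_add_abs_le_sqrt_two (sin_sq_add_cos_sq θ)
    linarith [abs_sin_le_one (2 * θ)]
  · have hπ : 2 * (π / 4) = π / 2 := by ring
    have h := hb ⟨π / 4, rfl⟩
    simp only [hπ, sin_pi_div_two, cos_pi_div_four, sin_pi_div_four, abs_one,
      abs_of_pos (by positivity : (0 : ℝ) < √2 / 2)] at h
    linarith
end

section
/- As 4×4 unitary channels, (S⊗S)ρ(S⊗S)† + (S†⊗S†)ρ(S†⊗S†)† = CZ·ρ·CZ + CZ_X·ρ·CZ_X for all 4×4 matrices ρ, where CZ = Π₀⊗1 + Π₁⊗Z and CZ_X = (X⊗X)CZ(X⊗X). -/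
open Matrix Kronecker

noncomputable def Pi0 : Matrix (Fin 2) (Fin 2) ℂ := !![1, 0; 0, 0]
noncomputable def Pi1 : Matrix (Fin 2) (Fin 2) ℂ := !![0, 0; 0, 1]
noncomputable def Xg : Matrix (Fin 2) (Fin 2) ℂ := !![0, 1; 1, 0]
/-- The controlled-Z gate `CZ = Π₀⊗1 + Π₁⊗Z`. -/
noncomputable def CZ : Matrix (Fin 2 × Fin 2) (Fin 2 × Fin 2) ℂ :=
  Pi0 ⊗ₖ (1 : Matrix (Fin 2) (Fin 2) ℂ) + Pi1 ⊗ₖ Zg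

/-- `CZ_X = (X⊗X) CZ (X⊗X)`. -/
noncomputable def CZX : Matrix (Fin 2 × Fin 2) (Fin 2 × Fin 2) ℂ :=
  (Xg ⊗ₖ Xg) * CZ * (Xg ⊗ₖ Xg)

noncomputable def dS : Fin 2 × Fin 2 → ℂ := fun p => ![(1:ℂ), Complex.I] p.1 * ![(1:ℂ), Complex.I] p.2
noncomputable def dC : Fin 2 × Fin 2 → ℂ := fun p => ![(1:ℂ), 1, 1, -1] (finProdFinEquiv (p.2, p.1))
noncomputable def dX : Fin 2 × Fin 2 → ℂ := fun p => ![(-1:ℂ), 1, 1, 1] (finProdFinEquiv (p.2, p.1))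

lemma hSS : Sg ⊗ₖ Sg = Matrix.diagonal dS := by
  ext ⟨i, k⟩ ⟨j, l⟩
  fin_cases i <;> fin_cases k <;> fin_cases j <;> fin_cases l <;>
    norm_num [Sg, dS, Matrix.diagonal, Prod.ext_iff]

lemma hCZ : CZ = Matrix.diagonal dC := by
  ext ⟨i, k⟩ ⟨j, l⟩
  fin_cases i <;> fin_cases k <;> fin_cases j <;> fin_cases l <;>
    norm_num [CZ, Pi0, Pi1, Zg, dC, Matrix.diagonal, finProdFinEquiv, Prod.ext_iff]

lemma hCZX : CZX = Matrix.diagonal dX := by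
  ext ⟨i, k⟩ ⟨j, l⟩
  fin_cases i <;> fin_cases k <;> fin_cases j <;> fin_cases l <;>
    simp [CZX, CZ, Pi0, Pi1, Zg, Xg, dX, Matrix.diagonal, finProdFinEquiv,
      Matrix.mul_apply, Fintype.sum_prod_type, Fin.sum_univ_succ, Prod.ext_iff]

lemma key (i j : Fin 2 × Fin 2) :
    dS i * star (dS j) + star (dS i) * dS j = dC i * dC j + dX i * dX j := by
  obtain ⟨i1, i2⟩ := i; obtain ⟨j1, j2⟩ := j
  fin_cases i1 <;> fin_cases i2 <;> fin_cases j1 <;> fin_cases j2 <;>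
    simp [dS, dC, dX, finProdFinEquiv, Complex.ext_iff]

/-- `(S⊗S)ρ(S⊗S)† + (S†⊗S†)ρ(S†⊗S†)† = CZ·ρ·CZ + CZ_X·ρ·CZ_X`
for every 4×4 complex matrix ρ. -/
theorem stmt16 (ρ : Matrix (Fin 2 × Fin 2) (Fin 2 × Fin 2) ℂ) :
    (Sg ⊗ₖ Sg) * ρ * (Sg ⊗ₖ Sg)ᴴ + (Sgᴴ ⊗ₖ Sgᴴ) * ρ * (Sgᴴ ⊗ₖ Sgᴴ)ᴴ
      = CZ * ρ * CZ + CZX * ρ * CZX := by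
  have h2 : Sgᴴ ⊗ₖ Sgᴴ = Matrix.diagonal (star dS) := by
    ext ⟨i, k⟩ ⟨j, l⟩
    fin_cases i <;> fin_cases k <;> fin_cases j <;> fin_cases l <;>
      norm_num [Sg, dS, Matrix.diagonal, Matrix.conjTranspose_apply, Prod.ext_iff]
  rw [h2, hSS, hCZ, hCZX, Matrix.diagonal_conjTranspose, Matrix.diagonal_conjTranspose, star_star]
  ext i j
  simp only [Matrix.add_apply, Matrix.diagonal_mul, Matrix.mul_diagonal, Pi.star_apply]
  linear_combination ρ i j * key i j
end
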